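/- arXiv:1801.06221 — 5 statements merged into one kernel-verified Lean document; each statement's English description precedes it below -/
import Mathlib

section
/- For any vectors a, b in R^n and any p ≥ 2, the inner product ⟨|b|^{p-2} b − |a|^{p-2} a, b − a⟩ is at least 2^{2−p} |b − a|^p. -/
open Real MeasureTheory
open scoped RealInnerProductSpace

/-!
With `A = ‖a‖`, `B = ‖b‖` fixed, the inner product is an affine function of `t = ‖b - a‖ ^ 2`,
while `2 ^ (2 - p) * ‖b - a‖ ^ p = 2 ^ (2 - p) * t ^ (p / 2)` is convex in `t`. As `t` ranges over
`[(B - A) ^ 2, (A + B) ^ 2]`, it suffices to check the endpoints, i.e. the collinear configurations.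
There the inequality is scalar: for `b` a nonnegative multiple of `a` it follows from
superadditivity of `x ↦ x ^ (p - 1)`, for a nonpositive multiple from the power mean inequality.
-/

namespace Real

variable {p A B : ℝ}

lemma rpow_eq_mul_rpow_sub_one {x r : ℝ} (hx : 0 ≤ x) (hr : 1 ≤ r) : x ^ r = x * x ^ (r - 1) := by
  rw [← rpow_one_add' hx (by linarith), add_sub_cancel]

lemma two_rpow_mul_abs_sub_rpow_le (hp : 2 ≤ p) (hA : 0 ≤ A) (hB : 0 ≤ B) :
    2 ^ (2 - p) * |B - A| ^ p ≤ (B - A) * (B ^ (p - 1) - A ^ (p - 1)) := by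
  wlog hAB : A ≤ B generalizing A B
  · rw [abs_sub_comm, show (B - A) * (B ^ (p - 1) - A ^ (p - 1))
      = (A - B) * (A ^ (p - 1) - B ^ (p - 1)) by ring]
    exact this hB hA (le_of_not_ge hAB)
  have hBA : 0 ≤ B - A := sub_nonneg.2 hAB
  have hsuper : (B - A) ^ (p - 1) + A ^ (p - 1) ≤ B ^ (p - 1) := by
    simpa using add_rpow_le_rpow_add hBA hA (by linarith : (1 : ℝ) ≤ p - 1)
  calc 2 ^ (2 - p) * |B - A| ^ p ≤ 1 * (B - A) ^ p := by
        rw [abs_of_nonneg hBA]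
        gcongr
        exact rpow_le_one_of_one_le_of_nonpos one_le_two (by linarith)
    _ = (B - A) * (B - A) ^ (p - 1) := by
        rw [one_mul, ← rpow_eq_mul_rpow_sub_one hBA (by linarith)]
    _ ≤ (B - A) * (B ^ (p - 1) - A ^ (p - 1)) := by gcongr; linarith

lemma two_rpow_mul_add_rpow_le (hp : 2 ≤ p) (hA : 0 ≤ A) (hB : 0 ≤ B) :
    2 ^ (2 - p) * (A + B) ^ p ≤ (A + B) * (A ^ (p - 1) + B ^ (p - 1)) := by
  have hmean : (A + B) ^ (p - 1) ≤ 2 ^ (p - 2) * (A ^ (p - 1) + B ^ (p - 1)) := by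
    lift A to NNReal using hA
    lift B to NNReal using hB
    have := NNReal.rpow_add_le_mul_rpow_add_rpow A B (by linarith : (1 : ℝ) ≤ p - 1)
    rw [show p - 1 - 1 = p - 2 by ring] at this
    exact_mod_cast this
  calc 2 ^ (2 - p) * (A + B) ^ p = (A + B) * (2 ^ (2 - p) * (A + B) ^ (p - 1)) := by
        rw [rpow_eq_mul_rpow_sub_one (x := A + B) (by positivity) (by linarith)]
        ring
    _ ≤ (A + B) * (2 ^ (2 - p) * (2 ^ (p - 2) * (A ^ (p - 1) + B ^ (p - 1)))) := by
        gcongr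
    _ = (A + B) * (A ^ (p - 1) + B ^ (p - 1)) := by
        rw [← mul_assoc (2 ^ (2 - p) : ℝ), ← rpow_add two_pos]
        norm_num

lemma sq_rpow_div_two {x : ℝ} (hx : 0 ≤ x) (r : ℝ) : (x ^ 2) ^ (r / 2) = x ^ r := by
  rw [← rpow_natCast, ← rpow_mul hx]
  ring_nf

lemma two_rpow_mul_rpow_div_two_le (hp : 2 ≤ p) (hA : 0 ≤ A) (hB : 0 ≤ B) {t : ℝ}
    (ht₁ : (B - A) ^ 2 ≤ t) (ht₂ : t ≤ (A + B) ^ 2) :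
    2 ^ (2 - p) * t ^ (p / 2) ≤
      (A ^ (p - 2) + B ^ (p - 2)) / 2 * t + (B ^ (p - 2) - A ^ (p - 2)) * (B ^ 2 - A ^ 2) / 2 := by
  set c := (A ^ (p - 2) + B ^ (p - 2)) / 2
  set e := (B ^ (p - 2) - A ^ (p - 2)) * (B ^ 2 - A ^ 2) / 2
  set f : ℝ → ℝ := fun s => 2 ^ (2 - p) * s ^ (p / 2) - c * s
  have hf : ConvexOn ℝ (Set.Ici 0) f :=
    ((convexOn_rpow (by linarith)).smul (by positivity)).sub
      ((concaveOn_id (convex_Ici 0)).smul (by positivity))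
  have hsplit {x : ℝ} (hx : 0 ≤ x) : x ^ (p - 1) = x * x ^ (p - 2) := by
    rw [rpow_eq_mul_rpow_sub_one hx (by linarith), sub_sub, one_add_one_eq_two]
  have hf₁ : f ((B - A) ^ 2) ≤ e := by
    have hpow : ((B - A) ^ 2) ^ (p / 2) = |B - A| ^ p := by
      rw [← sq_abs, sq_rpow_div_two (abs_nonneg _)]
    have hid : c * (B - A) ^ 2 + e = (B - A) * (B ^ (p - 1) - A ^ (p - 1)) := by
      rw [hsplit hA, hsplit hB]; ring
    simp only [f, hpow]
    linarith [two_rpow_mul_abs_sub_rpow_le hp hA hB]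
  have hf₂ : f ((A + B) ^ 2) ≤ e := by
    have hid : c * (A + B) ^ 2 + e = (A + B) * (A ^ (p - 1) + B ^ (p - 1)) := by
      rw [hsplit hA, hsplit hB]; ring
    simp only [f, sq_rpow_div_two (add_nonneg hA hB)]
    linarith [two_rpow_mul_add_rpow_le hp hA hB]
  have hft := hf.le_on_segment (Set.mem_Ici.2 (sq_nonneg (B - A)))
    (Set.mem_Ici.2 (sq_nonneg (A + B))) (by rw [segment_eq_Icc (ht₁.trans ht₂)]; exact ⟨ht₁, ht₂⟩)
  have := max_le hf₁ hf₂
  simp only [f] at hft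
  linarith

end Real

section InnerProductSpace

variable {E : Type*} [NormedAddCommGroup E] [InnerProductSpace ℝ E]

lemma inner_rpow_smul_sub_rpow_smul (q : ℝ) (a b : E) :
    ⟪‖b‖ ^ q • b - ‖a‖ ^ q • a, b - a⟫ =
      (‖a‖ ^ q + ‖b‖ ^ q) / 2 * ‖b - a‖ ^ 2 + (‖b‖ ^ q - ‖a‖ ^ q) * (‖b‖ ^ 2 - ‖a‖ ^ 2) / 2 := by
  simp only [inner_sub_left, inner_sub_right, real_inner_smul_left, real_inner_self_eq_norm_sq,
    norm_sub_sq_real, real_inner_comm a b]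
  ring

theorem two_rpow_mul_norm_sub_rpow_le_inner {p : ℝ} (hp : 2 ≤ p) (a b : E) :
    2 ^ (2 - p) * ‖b - a‖ ^ p ≤ ⟪‖b‖ ^ (p - 2) • b - ‖a‖ ^ (p - 2) • a, b - a⟫ := by
  rw [inner_rpow_smul_sub_rpow_smul, ← Real.sq_rpow_div_two (norm_nonneg _)]
  refine Real.two_rpow_mul_rpow_div_two_le hp (norm_nonneg a) (norm_nonneg b) ?_ ?_
  · rw [← sq_abs]
    exact pow_le_pow_left₀ (abs_nonneg _) (abs_norm_sub_norm_le b a) 2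
  · exact pow_le_pow_left₀ (norm_nonneg _) ((norm_sub_le b a).trans_eq (add_comm _ _)) 2

end InnerProductSpace

theorem stmt0 (n : ℕ) (p : ℝ) (hp : 2 ≤ p)
    (a b : EuclideanSpace ℝ (Fin n)) :
    ⟪‖b‖ ^ (p - 2) • b - ‖a‖ ^ (p - 2) • a, b - a⟫ ≥
      (2 : ℝ) ^ (2 - p) * ‖b - a‖ ^ p :=
  two_rpow_mul_norm_sub_rpow_le_inner hp a b
end

section
/- For any vectors a, b in R^n and any p with 1 ≤ p ≤ 2, the inner product ⟨|b|^{p-2} b − |a|^{p-2} a, b − a⟩ is at least (p−1) |b − a|^2 (1 + |a|^2 + |b|^2)^{(p−2)/2}. -/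
/-!
Put `A = ‖a‖ ≤ B = ‖b‖` (the inequality is symmetric in `a`, `b`) and `t = ⟪a, b⟫ ≤ A B`. Then
`⟪B^(p-2) b - A^(p-2) a, b - a⟫ = (B^(p-1) - A^(p-1)) (B - A) + (A^(p-2) + B^(p-2)) (A B - t)`
and `‖b - a‖² = (B - A)² + 2 (A B - t)`. Concavity of `x ↦ x^(p-1)` bounds the first term below by
`(p-1) B^(p-2) (B - A)²`, and `A^(p-2) ≥ B^(p-2)` bounds the second by `2 (p-1) B^(p-2) (A B - t)`,
so the inner product is at least `(p-1) B^(p-2) ‖b - a‖²`. Finally `B² ≤ 1 + A² + B²` and `p ≤ 2`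
give `(1 + A² + B²)^((p-2)/2) ≤ B^(p-2)`.
-/

open Real
open scoped RealInnerProductSpace

namespace Real

theorem mul_sub_mul_rpow_sub_one_le_rpow_sub_rpow {r A B : ℝ} (hr0 : 0 ≤ r) (hr1 : r ≤ 1)
    (hA : 0 ≤ A) (hB : 0 < B) :
    r * (B - A) * B ^ (r - 1) ≤ B ^ r - A ^ r := by
  have hamgm : A ^ r * B ^ (1 - r) ≤ r * A + (1 - r) * B :=
    geom_mean_le_arith_mean2_weighted hr0 (by linarith) hA hB.le (by ring)
  have hcancel : B ^ (1 - r) * B ^ (r - 1) = 1 := by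
    rw [← rpow_add hB, show 1 - r + (r - 1) = 0 by ring, rpow_zero]
  have hBr : B * B ^ (r - 1) = B ^ r := by
    rw [mul_comm, ← rpow_add_one hB.ne', sub_add_cancel]
  have := mul_le_mul_of_nonneg_right hamgm (rpow_nonneg hB.le (r - 1))
  rw [mul_assoc, hcancel, mul_one] at this
  linear_combination this + hBr

theorem rpow_div_two_le_rpow_of_sq_le {q x y : ℝ} (hq : q ≤ 0) (hx : 0 < x) (hxy : x ^ 2 ≤ y) :
    y ^ (q / 2) ≤ x ^ q := by
  calc y ^ (q / 2) ≤ (x ^ 2) ^ (q / 2) := rpow_le_rpow_of_nonpos (by positivity) hxy (by linarith)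
    _ = x ^ q := by rw [← rpow_natCast_mul hx.le]; congr 1; ring

end Real

section InnerProductSpace

variable {E : Type*} [NormedAddCommGroup E] [InnerProductSpace ℝ E]

theorem inner_rpow_smul_sub_rpow_smul_eq (q : ℝ) (a b : E) :
    ⟪‖b‖ ^ q • b - ‖a‖ ^ q • a, b - a⟫ =
      ‖a‖ ^ q * ‖a‖ ^ 2 + ‖b‖ ^ q * ‖b‖ ^ 2 - (‖a‖ ^ q + ‖b‖ ^ q) * ⟪a, b⟫ := by
  simp only [inner_sub_left, inner_sub_right, real_inner_smul_left,
    real_inner_self_eq_norm_sq, real_inner_comm a b]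
  ring

theorem mul_rpow_norm_mul_norm_sub_sq_le_inner {p : ℝ} (hp1 : 1 ≤ p) (hp2 : p ≤ 2) {a b : E}
    (hab : ‖a‖ ≤ ‖b‖) :
    (p - 1) * ‖b‖ ^ (p - 2) * ‖b - a‖ ^ 2 ≤ ⟪‖b‖ ^ (p - 2) • b - ‖a‖ ^ (p - 2) • a, b - a⟫ := by
  rcases eq_or_ne a 0 with rfl | ha
  · have : 0 ≤ ‖b‖ ^ (p - 2) * ‖b‖ ^ 2 := by positivity
    simp only [norm_zero, smul_zero, sub_zero, real_inner_smul_left, real_inner_self_eq_norm_sq]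
    nlinarith
  have hA : 0 < ‖a‖ := norm_pos_iff.2 ha
  have hB : 0 < ‖b‖ := hA.trans_le hab
  have hpow : ‖b‖ ^ (p - 2) ≤ ‖a‖ ^ (p - 2) := rpow_le_rpow_of_nonpos hA hab (by linarith)
  have htangent : (p - 1) * (‖b‖ - ‖a‖) * ‖b‖ ^ (p - 2) ≤
      ‖b‖ ^ (p - 2) * ‖b‖ - ‖a‖ ^ (p - 2) * ‖a‖ := by
    have := mul_sub_mul_rpow_sub_one_le_rpow_sub_rpow (r := p - 1) (by linarith) (by linarith)
      hA.le hB
    rw [show p - 1 - 1 = p - 2 by ring, show p - 1 = p - 2 + 1 by ring,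
      rpow_add_one hB.ne', rpow_add_one hA.ne'] at this
    linarith
  have hcs : ⟪a, b⟫ ≤ ‖a‖ * ‖b‖ := real_inner_le_norm a b
  rw [inner_rpow_smul_sub_rpow_smul_eq, norm_sub_sq_real, real_inner_comm]
  nlinarith [mul_le_mul_of_nonneg_right htangent (sub_nonneg.2 hab),
    mul_nonneg (sub_nonneg.2 hcs) (by nlinarith [rpow_nonneg hB.le (p - 2)] :
      0 ≤ ‖a‖ ^ (p - 2) + ‖b‖ ^ (p - 2) - 2 * (p - 1) * ‖b‖ ^ (p - 2))]

end InnerProductSpace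

theorem stmt1 (n : ℕ) (p : ℝ) (hp1 : 1 ≤ p) (hp2 : p ≤ 2)
    (a b : EuclideanSpace ℝ (Fin n)) :
    ⟪‖b‖ ^ (p - 2) • b - ‖a‖ ^ (p - 2) • a, b - a⟫ ≥
      (p - 1) * ‖b - a‖ ^ 2 * (1 + ‖a‖ ^ 2 + ‖b‖ ^ 2) ^ ((p - 2) / 2) := by
  wlog hab : ‖a‖ ≤ ‖b‖ generalizing a b
  · have := this b a (le_of_not_ge hab)
    rwa [← inner_neg_neg, neg_sub, neg_sub, norm_sub_rev, add_right_comm] at this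
  rcases eq_or_ne b 0 with rfl | hb
  · obtain rfl : a = 0 := norm_le_zero_iff.1 (by simpa using hab)
    simp
  have hM : (1 + ‖a‖ ^ 2 + ‖b‖ ^ 2) ^ ((p - 2) / 2) ≤ ‖b‖ ^ (p - 2) :=
    rpow_div_two_le_rpow_of_sq_le (by linarith) (norm_pos_iff.2 hb) (by nlinarith [sq_nonneg ‖a‖])
  calc (p - 1) * ‖b - a‖ ^ 2 * (1 + ‖a‖ ^ 2 + ‖b‖ ^ 2) ^ ((p - 2) / 2)
      ≤ (p - 1) * ‖b - a‖ ^ 2 * ‖b‖ ^ (p - 2) :=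
        mul_le_mul_of_nonneg_left hM (by have := sub_nonneg.2 hp1; positivity)
    _ = (p - 1) * ‖b‖ ^ (p - 2) * ‖b - a‖ ^ 2 := by ring
    _ ≤ _ := mul_rpow_norm_mul_norm_sub_sq_le_inner hp1 hp2 hab
end

section
/- For any p ≥ 2 there exists a constant C(p) > 0 such that for all vectors a, b in R^n, |b|^p ≥ |a|^p + p ⟨|a|^{p-2} a, b − a⟩ + C(p) |b − a|^p. -/
open Real MeasureTheory
open scoped RealInnerProductSpace
open Set


lemma supadd {q x y : ℝ} (hq : 1 ≤ q) (hx : 0 ≤ x) (hy : 0 ≤ y) :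
    x ^ q + y ^ q ≤ (x + y) ^ q := by
  have hq0 : (0:ℝ) < q := lt_of_lt_of_le one_pos hq
  have h1 : x ^ q ≤ x * (x + y) ^ (q - 1) := by
    calc x ^ q = x ^ (1 + (q-1)) := by ring_nf
    _ = x ^ (1:ℝ) * x ^ (q-1) := Real.rpow_add' hx (by linarith)
    _ = x * x ^ (q-1) := by rw [Real.rpow_one]
    _ ≤ x * (x + y) ^ (q-1) := by
        exact mul_le_mul_of_nonneg_left
          (Real.rpow_le_rpow hx (by linarith) (by linarith)) hx
  have h2 : y ^ q ≤ y * (x + y) ^ (q - 1) := by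
    calc y ^ q = y ^ (1 + (q-1)) := by ring_nf
    _ = y ^ (1:ℝ) * y ^ (q-1) := Real.rpow_add' hy (by linarith)
    _ = y * y ^ (q-1) := by rw [Real.rpow_one]
    _ ≤ y * (x + y) ^ (q-1) := by
        exact mul_le_mul_of_nonneg_left
          (Real.rpow_le_rpow hy (by linarith) (by linarith)) hy
  calc x ^ q + y ^ q ≤ (x + y) * (x + y) ^ (q-1) := by linarith [h1, h2]
  _ = (x + y) ^ (q-1) * (x+y) := by ring
  _ = (x+y) ^ ((q-1) + 1) := by rw [Real.rpow_add' (by linarith) (by linarith), Real.rpow_one]; 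
  _ = (x+y) ^ q := by ring_nf


lemma oneD {p x y : ℝ} (hp : 2 ≤ p) (hx : 0 ≤ x) (hy : 0 ≤ y) :
    x ^ p + p * x ^ (p-1) * (y - x) + |y - x| ^ p ≤ y ^ p := by
  have hp1 : (1:ℝ) ≤ p - 1 := by linarith
  rcases le_total x y with hxy | hxy
  · -- f t = t^p - p x^(p-1) t - (t-x)^p monotone on Ici x
    set f : ℝ → ℝ := fun t => t ^ p - p * x ^ (p-1) * t - (t - x) ^ p with hf
    have hd : ∀ t : ℝ, HasDerivAt f (p * t ^ (p-1) - p * x ^ (p-1) - p * (t-x) ^ (p-1)) t := by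
      intro t
      have h1 : HasDerivAt (fun t : ℝ => t ^ p) (p * t ^ (p-1)) t :=
        Real.hasDerivAt_rpow_const (Or.inr (by linarith))
      have h2 : HasDerivAt (fun t : ℝ => p * x ^ (p-1) * t) (p * x ^ (p-1)) t := by
        simpa using (hasDerivAt_id t).const_mul (p * x ^ (p-1))
      have h3 : HasDerivAt (fun t : ℝ => (t - x) ^ p) (p * (t-x) ^ (p-1)) t := by
        have := (Real.hasDerivAt_rpow_const (x := t - x) (p := p)
          (Or.inr (by linarith))).comp t ((hasDerivAt_id t).sub_const x)
        exact this.congr_deriv (by simp)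
      exact (h1.sub h2).sub h3
    have hmono : MonotoneOn f (Ici x) := by
      apply monotoneOn_of_deriv_nonneg (convex_Ici x)
      · exact fun t _ => ((hd t).continuousAt).continuousWithinAt
      · exact fun t _ => ((hd t).differentiableAt).differentiableWithinAt
      · intro t ht
        rw [interior_Ici] at ht
        rw [(hd t).deriv]
        have hsup : x ^ (p-1) + (t - x) ^ (p-1) ≤ t ^ (p-1) := by
          have := supadd (q := p-1) (x := x) (y := t - x) hp1 hx (by simp at ht; linarith)
          simpa [add_sub_cancel] using this
        nlinarith [hsup, (by linarith : (0:ℝ) < p)]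
    have := hmono (self_mem_Ici) (by exact hxy) hxy
    have habs : |y - x| = y - x := abs_of_nonneg (by linarith)
    simp only [hf] at this
    rw [habs]
    have hx0 : (x - x : ℝ) = 0 := by ring
    rw [hx0, Real.zero_rpow (by linarith : p ≠ 0)] at this
    nlinarith [this]
  · -- g t = t^p - (x-t)^p - p x^(p-1) t antitone on Icc 0 x
    set g : ℝ → ℝ := fun t => t ^ p - (x - t) ^ p - p * x ^ (p-1) * t with hg
    have hd : ∀ t : ℝ, HasDerivAt g (p * t ^ (p-1) + p * (x-t) ^ (p-1) - p * x ^ (p-1)) t := by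
      intro t
      have h1 : HasDerivAt (fun t : ℝ => t ^ p) (p * t ^ (p-1)) t :=
        Real.hasDerivAt_rpow_const (Or.inr (by linarith))
      have h2 : HasDerivAt (fun t : ℝ => p * x ^ (p-1) * t) (p * x ^ (p-1)) t := by
        simpa using (hasDerivAt_id t).const_mul (p * x ^ (p-1))
      have h3 : HasDerivAt (fun t : ℝ => (x - t) ^ p) (-(p * (x-t) ^ (p-1))) t := by
        have := (Real.hasDerivAt_rpow_const (x := x - t) (p := p)
          (Or.inr (by linarith))).comp t (((hasDerivAt_id t).const_sub x))
        exact this.congr_deriv (by simp)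
      have := (h1.sub h3).sub h2
      exact this.congr_deriv (by ring)
    have hanti : AntitoneOn g (Icc 0 x) := by
      apply antitoneOn_of_deriv_nonpos (convex_Icc 0 x)
      · exact fun t _ => ((hd t).continuousAt).continuousWithinAt
      · exact fun t ht => ((hd t).differentiableAt).differentiableWithinAt
      · intro t ht
        rw [interior_Icc] at ht
        rw [(hd t).deriv]
        have hsup : t ^ (p-1) + (x - t) ^ (p-1) ≤ x ^ (p-1) := by
          have := supadd (q := p-1) (x := t) (y := x - t) hp1 (le_of_lt ht.1) (by linarith [ht.2])
          simpa [add_sub_cancel] using this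
        nlinarith [hsup, (by linarith : (0:ℝ) < p)]
    have := hanti (mem_Icc.2 ⟨hy, hxy⟩) (mem_Icc.2 ⟨hx, le_refl x⟩) hxy
    have habs : |y - x| = x - y := by rw [abs_sub_comm]; exact abs_of_nonneg (by linarith)
    simp only [hg] at this
    rw [habs]
    have hx0 : (x - x : ℝ) = 0 := by ring
    rw [hx0, Real.zero_rpow (by linarith : p ≠ 0)] at this
    nlinarith [this]


lemma sq_rpow (p : ℝ) {y : ℝ} (hy : 0 ≤ y) : (y^2)^(p/2) = y^p := by
  rw [← Real.rpow_natCast y 2, ← Real.rpow_mul hy]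
  congr 1
  push_cast
  ring

lemma keylem {p : ℝ} (hp : 2 ≤ p) {x y s : ℝ} (hx : 0 ≤ x) (hy : 0 ≤ y)
    (hs : |s| ≤ x * y) :
    x^p + p * (x^(p-2) * (s - x^2)) + 2^(1-p) * (x^2 + y^2 - 2*s)^(p/2) ≤ y^p := by
  have hC0 : (0:ℝ) < 2^(1-p) := Real.rpow_pos_of_pos two_pos _
  have hC1 : (2:ℝ)^(1-p) ≤ 1 :=
    Real.rpow_le_one_of_one_le_of_nonpos (by norm_num) (by linarith)
  rcases eq_or_lt_of_le hx with hx0 | hx0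
  · -- x = 0
    have hs0 : s = 0 := by
      have : |s| ≤ 0 := by rw [← hx0] at hs; simpa using hs
      simpa using le_antisymm this (abs_nonneg s)
    subst hs0
    rw [← hx0]
    have h1 : (0:ℝ)^p = 0 := Real.zero_rpow (by linarith)
    have h2 : ((0:ℝ)^2 + y^2 - 2*0) = y^2 := by ring
    rw [h1, h2, sq_rpow p hy]
    have hyp : 0 ≤ y^p := Real.rpow_nonneg hy p
    nlinarith
  · -- x > 0
    have e1 : x^(p-1) = x^(p-2) * x := by
      rw [show p - 1 = (p-2) + 1 by ring, Real.rpow_add_one hx0.ne']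
    have e2 : x^p = x^(p-2) * x^2 := by
      rw [← Real.rpow_natCast x 2, ← Real.rpow_add hx0]
      norm_num
    rcases eq_or_lt_of_le hy with hy0 | hy0
    · -- y = 0
      have hs0 : s = 0 := by
        have : |s| ≤ 0 := by rw [← hy0] at hs; simpa using hs
        simpa using le_antisymm this (abs_nonneg s)
      subst hs0
      rw [← hy0]
      have h1 : (0:ℝ)^p = 0 := Real.zero_rpow (by linarith)
      have h2 : (x^2 + (0:ℝ)^2 - 2*0) = x^2 := by ring
      rw [h1, h2, sq_rpow p hx]
      have hxp : 0 < x^p := Real.rpow_pos_of_pos hx0 p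
      nlinarith [e2, Real.rpow_pos_of_pos hx0 (p-2)]
    · -- x > 0, y > 0
      have hxy : (0:ℝ) < x * y := mul_pos hx0 hy0
      set L : ℝ := (s + x*y)/(2*(x*y)) with hL
      have hL0 : 0 ≤ L := by
        apply div_nonneg _ (by linarith)
        have := neg_abs_le s
        linarith [abs_le.1 (le_refl |s|)]
      have hL1 : L ≤ 1 := by
        rw [div_le_one (by linarith)]
        have := le_abs_self s
        linarith
      have hL2 : L * (2*(x*y)) = s + x*y := by
        rw [hL]; field_simp
      have hLs : s = L * (x*y) + (1 - L) * (-(x*y)) := by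
        linear_combination -hL2
      have key1 : x^2 + y^2 - 2*s = L*((x-y)^2) + (1-L)*((x+y)^2) := by
        rw [hLs]; ring
      have key2 : s - x^2 = L*(x*y - x^2) + (1-L)*(-(x*y) - x^2) := by
        rw [hLs]; ring
      have hq2 : (1:ℝ) ≤ p/2 := by linarith
      have hconv := (convexOn_rpow hq2).2
        (mem_Ici.2 (sq_nonneg (x-y))) (mem_Ici.2 (sq_nonneg (x+y)))
        hL0 (by linarith : (0:ℝ) ≤ 1 - L) (by ring)
      simp only [smul_eq_mul] at hconv
      rw [sq_rpow p (by linarith : (0:ℝ) ≤ x + y)] at hconv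
      have habs : ((x-y)^2)^(p/2) = |x-y|^p := by
        rw [← sq_abs, sq_rpow p (abs_nonneg _)]
      rw [habs] at hconv
      rw [← key1] at hconv
      -- endpoint inequalities
      have hA : x^p + p*x^(p-1)*(y-x) + |x-y|^p ≤ y^p := by
        have := oneD hp hx hy
        rwa [abs_sub_comm y x] at this
      have hB : x^p - p*x^(p-1)*(x+y) + 2^(1-p)*(x+y)^p ≤ y^p := by
        have hhalf := (convexOn_rpow (by linarith : (1:ℝ) ≤ p)).2
          (mem_Ici.2 hx) (mem_Ici.2 hy) (by norm_num : (0:ℝ) ≤ 1/2) (by norm_num : (0:ℝ) ≤ 1/2) (by norm_num)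
        simp only [smul_eq_mul] at hhalf
        -- (x+y)^p = 2^p * ((x+y)/2)^p
        have h2p : (x+y)^p = 2^p * (1/2*x + 1/2*y)^p := by
          rw [← Real.mul_rpow (by norm_num) (by linarith)]
          congr 1; ring
        have hCC : (2:ℝ)^(1-p) * 2^p = 2 := by
          rw [← Real.rpow_add two_pos]
          norm_num
        have h3 : 2^(1-p) * (x+y)^p ≤ x^p + y^p := by
          rw [h2p, ← mul_assoc, hCC]
          nlinarith [hhalf]
        have hx1p : 0 ≤ p * x^(p-1) * y :=
          mul_nonneg (mul_nonneg (by linarith) (Real.rpow_nonneg hx _)) hy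
        have hxp : 0 < x^p := Real.rpow_pos_of_pos hx0 p
        have exx : x^(p-1) * x = x^p := by
          rw [← Real.rpow_add_one hx0.ne' (p-1)]; congr 1; ring
        nlinarith [h3, hx1p, hxp, exx]
      -- combine
      have hAc : x^p + p*x^(p-1)*(y-x) + 2^(1-p)*|x-y|^p ≤ y^p := by
        have ht : 0 ≤ |x-y|^p := Real.rpow_nonneg (abs_nonneg (x-y)) p
        have := mul_le_of_le_one_left ht hC1
        linarith [hA]
      calc x^p + p * (x^(p-2) * (s - x^2)) + 2^(1-p) * (x^2 + y^2 - 2*s)^(p/2)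
          ≤ x^p + p * (x^(p-2) * (s - x^2)) + 2^(1-p) * (L*|x-y|^p + (1-L)*((x+y)^p)) := by
            have := mul_le_mul_of_nonneg_left hconv hC0.le
            linarith
        _ = L*(x^p + p*x^(p-1)*(y-x) + 2^(1-p)*|x-y|^p)
            + (1-L)*(x^p - p*x^(p-1)*(x+y) + 2^(1-p)*(x+y)^p) := by
            rw [key2, e1, e2]; ring
        _ ≤ L*y^p + (1-L)*y^p := by
            have u1 := mul_le_mul_of_nonneg_left hAc hL0
            have u2 := mul_le_mul_of_nonneg_left hB (by linarith : (0:ℝ) ≤ 1 - L)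
            linarith
        _ = y^p := by ring

theorem stmt2 (p : ℝ) (hp : 2 ≤ p) :
    ∃ C : ℝ, 0 < C ∧ ∀ (n : ℕ) (a b : EuclideanSpace ℝ (Fin n)),
      ‖b‖ ^ p ≥ ‖a‖ ^ p + p * ⟪‖a‖ ^ (p - 2) • a, b - a⟫ + C * ‖b - a‖ ^ p := by
  refine ⟨2^(1-p), Real.rpow_pos_of_pos two_pos _, fun n a b => ?_⟩
  have hinner : ⟪‖a‖ ^ (p - 2) • a, b - a⟫ = ‖a‖^(p-2) * (⟪a, b⟫ - ‖a‖^2) := by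
    rw [real_inner_smul_left, inner_sub_right, real_inner_self_eq_norm_sq]
  have hnorm2 : ‖b - a‖^2 = ‖a‖^2 + ‖b‖^2 - 2*⟪a, b⟫ := by
    rw [norm_sub_sq_real, real_inner_comm]
    ring
  have hnormp : ‖b - a‖^p = (‖a‖^2 + ‖b‖^2 - 2*⟪a, b⟫)^(p/2) := by
    rw [← sq_rpow p (norm_nonneg (b - a)), hnorm2]
  rw [ge_iff_le, hinner, hnormp]
  exact keylem hp (norm_nonneg a) (norm_nonneg b) (abs_real_inner_le_norm a b)
end

section
/- For any p with 1 < p < 2 and any vectors a, b in R^n, |b|^p ≥ |a|^p + p ⟨|a|^{p-2} a, b − a⟩ + p(p−1) |b − a|^2 ∫₀¹ ∫₀ᵗ |(1−s)a + s b|^{p−2} ds dt. -/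
open Real MeasureTheory intervalIntegral
open scoped RealInnerProductSpace


lemma rpow_mul_self' {x : ℝ} (hx : 0 ≤ x) {r : ℝ} (hr : r + 1 ≠ 0) :
    x ^ r * x = x ^ (r + 1) := by
  rcases hx.eq_or_lt with h | h
  · simp [← h, Real.zero_rpow hr]
  · rw [Real.rpow_add_one h.ne']

lemma sq_rpow' {x : ℝ} (hx : 0 ≤ x) {r : ℝ} (hr : r ≠ 0) :
    (x ^ 2) ^ (r / 2) = x ^ r := by
  rcases hx.eq_or_lt with h | h
  · rw [← h]
    simp [Real.zero_rpow hr, Real.zero_rpow (div_ne_zero hr two_ne_zero)]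
  · rw [← Real.rpow_natCast x 2, ← Real.rpow_mul hx]
    congr 1
    push_cast
    ring

lemma intInt_abs_rpow {r : ℝ} (hr : -1 < r) (c d : ℝ) :
    IntervalIntegrable (fun u => |u| ^ r) volume c d := by
  have key : ∀ e : ℝ, IntervalIntegrable (fun u => |u| ^ r) volume 0 e := by
    have key0 : ∀ e : ℝ, 0 ≤ e → IntervalIntegrable (fun u => |u| ^ r) volume 0 e := by
      intro e he
      rw [intervalIntegrable_iff, Set.uIoc_of_le he]
      apply (intervalIntegrable_rpow' hr (a := 0) (b := e)).1.congr_fun ?_ measurableSet_Ioc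
      intro x hx
      simp only
      rw [abs_of_pos hx.1]
    intro e
    rcases le_total 0 e with he | he
    · exact key0 e he
    · have := (IntervalIntegrable.iff_comp_neg (h := enorm_ne_top)).mp (key0 (-e) (by linarith))
      simp only [neg_zero, neg_neg, abs_neg] at this
      exact this
  exact ((key c).symm.trans (key d))

lemma intInt_abs_sub_rpow {r : ℝ} (hr : -1 < r) (s₀ c d : ℝ) :
    IntervalIntegrable (fun s => |s - s₀| ^ r) volume c d := by
  have := (intInt_abs_rpow hr (c - s₀) (d - s₀)).comp_sub_right s₀
  simpa using this
lemma Ksum (p s₀ : ℝ) (hp1 : 1 < p) (hp2 : p < 2) (h0 : 0 ≤ s₀) (h1 : s₀ ≤ 1) :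
    (∫ t in (0:ℝ)..1, ∫ s in (0:ℝ)..t, |s - s₀| ^ (p - 2))
      = (p * s₀ ^ (p - 1) - s₀ ^ p + (1 - s₀) ^ p) / (p * (p - 1)) := by
  have hr : (-1:ℝ) < p - 2 := by linarith
  have hr1 : (-1:ℝ) < p - 1 := by linarith
  have hp1' : (0:ℝ) < p - 1 := by linarith
  have hpne : p ≠ 0 := by positivity
  have hne : p - 1 ≠ 0 := ne_of_gt hp1'
  have hint := fun c d => intInt_abs_sub_rpow hr s₀ c d
  set J : ℝ → ℝ := fun t => ∫ s in (0:ℝ)..t, |s - s₀| ^ (p - 2) with hJ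
  have hmono : Monotone J := by
    intro t₁ t₂ h
    have heq : J t₂ - J t₁ = ∫ s in t₁..t₂, |s - s₀| ^ (p - 2) := by
      rw [hJ]; simp only
      rw [← intervalIntegral.integral_add_adjacent_intervals (hint 0 t₁) (hint t₁ t₂)]
      ring
    have h2 : 0 ≤ ∫ s in t₁..t₂, |s - s₀| ^ (p - 2) :=
      intervalIntegral.integral_nonneg h (fun u _ => Real.rpow_nonneg (abs_nonneg _) _)
    linarith
  have step1 : ∀ t ∈ Set.Icc (0:ℝ) s₀, J t = (s₀ ^ (p-1) - (s₀ - t) ^ (p-1)) / (p-1) := by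
    intro t ht
    have hc : J t = ∫ s in (0:ℝ)..t, (s₀ - s) ^ (p - 2) := by
      apply intervalIntegral.integral_congr
      intro s hs
      rw [Set.uIcc_of_le ht.1] at hs
      simp only
      rw [abs_of_nonpos (by linarith [hs.2, ht.2] : s - s₀ ≤ 0), neg_sub]
    rw [hc, intervalIntegral.integral_comp_sub_left (fun u => u ^ (p - 2)) s₀,
      integral_rpow (Or.inl hr), show p - 2 + 1 = p - 1 by ring, sub_zero]
  have hJs₀ : J s₀ = s₀ ^ (p-1) / (p-1) := by
    rw [step1 s₀ ⟨h0, le_refl _⟩, sub_self, Real.zero_rpow hne, sub_zero]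
  have step2 : ∀ t ∈ Set.Icc s₀ (1:ℝ), J t = (s₀ ^ (p-1) + (t - s₀) ^ (p-1)) / (p-1) := by
    intro t ht
    have hsplit : J t = J s₀ + ∫ s in s₀..t, |s - s₀| ^ (p - 2) :=
      (intervalIntegral.integral_add_adjacent_intervals (hint 0 s₀) (hint s₀ t)).symm
    have hc : (∫ s in s₀..t, |s - s₀| ^ (p - 2)) = ∫ s in s₀..t, (s - s₀) ^ (p - 2) := by
      apply intervalIntegral.integral_congr
      intro s hs
      rw [Set.uIcc_of_le ht.1] at hs
      simp only
      rw [abs_of_nonneg (by linarith [hs.1] : (0:ℝ) ≤ s - s₀)]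
    rw [hsplit, hJs₀, hc, intervalIntegral.integral_comp_sub_right (fun u => u ^ (p - 2)) s₀,
      sub_self, integral_rpow (Or.inl hr), show p - 2 + 1 = p - 1 by ring,
      Real.zero_rpow hne, sub_zero]
    ring
  have hint1 : IntervalIntegrable (fun t => (s₀ - t) ^ (p-1)) volume 0 s₀ := by
    have := (intervalIntegrable_rpow' hr1 (a := s₀) (b := 0)).comp_sub_left s₀
    simpa using this
  have hint2 : IntervalIntegrable (fun t => (t - s₀) ^ (p-1)) volume s₀ 1 := by
    have := (intervalIntegrable_rpow' hr1 (a := 0) (b := 1 - s₀)).comp_sub_right s₀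
    simpa using this
  have piece1 : (∫ t in (0:ℝ)..s₀, J t) = (s₀ ^ (p-1) * s₀ - s₀ ^ p / p) / (p-1) := by
    rw [intervalIntegral.integral_congr (g := fun t => (s₀ ^ (p-1) - (s₀ - t) ^ (p-1)) / (p-1))
      (fun t ht => step1 t (by rwa [Set.uIcc_of_le h0] at ht))]
    rw [intervalIntegral.integral_div,
      intervalIntegral.integral_sub intervalIntegrable_const hint1,
      intervalIntegral.integral_const,
      intervalIntegral.integral_comp_sub_left (fun u => u ^ (p - 1)) s₀,
      integral_rpow (Or.inl hr1), show p - 1 + 1 = p by ring, sub_self,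
      Real.zero_rpow hpne, sub_zero, sub_zero]
    simp only [smul_eq_mul]
    ring
  have piece2 : (∫ t in s₀..(1:ℝ), J t)
      = (s₀ ^ (p-1) * (1 - s₀) + (1 - s₀) ^ p / p) / (p-1) := by
    rw [intervalIntegral.integral_congr (g := fun t => (s₀ ^ (p-1) + (t - s₀) ^ (p-1)) / (p-1))
      (fun t ht => step2 t (by rwa [Set.uIcc_of_le h1] at ht))]
    rw [intervalIntegral.integral_div,
      intervalIntegral.integral_add intervalIntegrable_const hint2,
      intervalIntegral.integral_const,
      intervalIntegral.integral_comp_sub_right (fun u => u ^ (p - 1)) s₀,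
      sub_self, integral_rpow (Or.inl hr1), show p - 1 + 1 = p by ring,
      Real.zero_rpow hpne, sub_zero]
    simp only [smul_eq_mul]
    ring
  have hsplit : (∫ t in (0:ℝ)..1, J t) = (∫ t in (0:ℝ)..s₀, J t) + ∫ t in s₀..(1:ℝ), J t :=
    (intervalIntegral.integral_add_adjacent_intervals
      (hmono.intervalIntegrable) (hmono.intervalIntegrable)).symm
  rw [hsplit, piece1, piece2]
  have hs₀p : s₀ ^ (p-1) * s₀ = s₀ ^ p := by
    rcases h0.eq_or_lt with h | h
    · rw [← h]; simp [Real.zero_rpow hne, Real.zero_rpow hpne]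
    · rw [← Real.rpow_add_one h.ne', show p - 1 + 1 = p by ring]
  rw [← hs₀p]
  field_simp
  ring

lemma oneD_s3 (p A B C : ℝ) (hp1 : 1 < p) (hp2 : p < 2) (hC : 0 ≤ C) (hCS : B^2 ≤ A*C)
    (hq : ∀ s ∈ Set.Icc (0:ℝ) 1, 0 < A + 2*B*s + C*s^2) :
    A^(p/2) + p * A^(p/2-1) * B + p*(p-1)*C *
      (∫ t in (0:ℝ)..1, ∫ s in (0:ℝ)..t, (A + 2*B*s + C*s^2)^(p/2-1))
      ≤ (A + 2*B + C)^(p/2) := by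
  set q : ℝ → ℝ := fun s => A + 2*B*s + C*s^2 with hqdef
  set m : ℝ → ℝ := fun s => B + C*s with hmdef
  set F : ℝ → ℝ := fun s => q s ^ (p/2) with hFdef
  set F₁ : ℝ → ℝ := fun s => p * q s ^ (p/2-1) * m s with hF₁def
  set F₂ : ℝ → ℝ := fun s => p * ((p-2) * q s ^ (p/2-2) * (m s)^2 + q s ^ (p/2-1) * C)
    with hF₂def
  set G : ℝ → ℝ := fun s => p*(p-1)*C * q s ^ (p/2-1) with hGdef
  have hqc : Continuous q := by fun_prop
  have hmc : Continuous m := by fun_prop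
  have hqd : ∀ s : ℝ, HasDerivAt q (2 * m s) s := by
    intro s
    have h1 : HasDerivAt (fun x : ℝ => A + 2*B*x + C*x^2) (0 + 2*B*1 + C*(2*s^1)) s := by
      exact (((hasDerivAt_const s A).add ((hasDerivAt_id s).const_mul (2*B))).add
        ((hasDerivAt_pow 2 s).const_mul C))
    convert h1 using 1
    simp [hmdef]; ring
  have hder1 : ∀ s ∈ Set.Icc (0:ℝ) 1, HasDerivAt F (F₁ s) s := by
    intro s hs
    have h := (hqd s).rpow_const (p := p/2) (Or.inl (hq s hs).ne')
    convert h using 1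
    simp only [hF₁def]
    ring
  have hder2 : ∀ s ∈ Set.Icc (0:ℝ) 1, HasDerivAt F₁ (F₂ s) s := by
    intro s hs
    have h1 := (hqd s).rpow_const (p := p/2-1) (Or.inl (hq s hs).ne')
    have h2 := (h1.const_mul p).mul (((hasDerivAt_id s).const_mul C).const_add B)
    convert h2 using 1
    · rfl
    · rfl
    · rfl
    simp only [hF₂def, hmdef, id_eq]
    rw [show p/2-1-1 = p/2-2 by ring]
    ring
  have hcont_pow : ∀ r : ℝ, ContinuousOn (fun s => q s ^ r) (Set.Icc (0:ℝ) 1) := by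
    intro r s hs
    exact (ContinuousAt.comp (Real.continuousAt_rpow_const (q s) r (Or.inl (hq s hs).ne'))
      hqc.continuousAt).continuousWithinAt
  have hF₁c : ContinuousOn F₁ (Set.Icc (0:ℝ) 1) :=
    (((hcont_pow (p/2-1)).const_smul p).mul hmc.continuousOn)
  have hF₂c : ContinuousOn F₂ (Set.Icc (0:ℝ) 1) := by
    apply ContinuousOn.const_smul ?_ p
    exact (((hcont_pow (p/2-2)).const_smul (p-2)).mul
      ((hmc.continuousOn).pow 2)).add ((hcont_pow (p/2-1)).mul continuousOn_const)
  have hGc : ContinuousOn G (Set.Icc (0:ℝ) 1) := (hcont_pow (p/2-1)).const_smul (p*(p-1)*C)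
  have hsub : ∀ t₁ t₂, t₁ ∈ Set.Icc (0:ℝ) 1 → t₂ ∈ Set.Icc (0:ℝ) 1 →
      Set.uIcc t₁ t₂ ⊆ Set.Icc (0:ℝ) 1 := by
    intro t₁ t₂ h1 h2
    exact Set.uIcc_subset_Icc h1 h2
  have h01 : (0:ℝ) ∈ Set.Icc (0:ℝ) 1 := by norm_num
  have h11 : (1:ℝ) ∈ Set.Icc (0:ℝ) 1 := by norm_num
  have hpoint : ∀ s ∈ Set.Icc (0:ℝ) 1, G s ≤ F₂ s := by
    intro s hs
    have hqs := hq s hs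
    have hMQ : (m s)^2 - q s * C = B^2 - A*C := by simp only [hmdef, hqdef]; ring
    have hX : (0:ℝ) < q s ^ (p/2-2) := Real.rpow_pos_of_pos hqs _
    have e1 : F₂ s - G s = p*(p-2)*(q s ^ (p/2-2))*((m s)^2 - q s * C) := by
      simp only [hF₂def, hGdef]
      rw [show p/2-1 = (p/2-2)+1 by ring, Real.rpow_add_one hqs.ne']
      ring
    have e2 : p*(p-2)*(q s ^ (p/2-2))*((m s)^2 - q s * C)
        = (2-p) * (q s * C - (m s)^2) * (q s ^ (p/2-2)) * p := by ring
    have e3 : (0:ℝ) ≤ (2-p) * (q s * C - (m s)^2) * (q s ^ (p/2-2)) * p :=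
      mul_nonneg (mul_nonneg (mul_nonneg (by linarith) (by linarith)) hX.le) (by linarith)
    linarith
  have key1 : ∀ t ∈ Set.Icc (0:ℝ) 1, (∫ s in (0:ℝ)..t, F₂ s) = F₁ t - F₁ 0 := by
    intro t ht
    exact integral_eq_sub_of_hasDerivAt (fun x hx => hder2 x (hsub 0 t h01 ht hx))
      ((hF₂c.mono (hsub 0 t h01 ht)).intervalIntegrable)
  have key2 : ∀ t ∈ Set.Icc (0:ℝ) 1, (∫ s in (0:ℝ)..t, G s) ≤ F₁ t - F₁ 0 := by
    intro t ht
    rw [← key1 t ht]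
    exact intervalIntegral.integral_mono_on ht.1
      ((hGc.mono (hsub 0 t h01 ht)).intervalIntegrable)
      ((hF₂c.mono (hsub 0 t h01 ht)).intervalIntegrable)
      (fun s hs => hpoint s ⟨hs.1, le_trans hs.2 ht.2⟩)
  set JG : ℝ → ℝ := fun t => ∫ s in (0:ℝ)..t, G s with hJGdef
  have hJGmono : MonotoneOn JG (Set.Icc (0:ℝ) 1) := by
    intro t₁ h₁ t₂ h₂ h12
    have hsplit : JG t₂ = JG t₁ + ∫ s in t₁..t₂, G s :=
      (intervalIntegral.integral_add_adjacent_intervals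
        ((hGc.mono (hsub 0 t₁ h01 h₁)).intervalIntegrable)
        ((hGc.mono (hsub t₁ t₂ h₁ h₂)).intervalIntegrable)).symm
    have hnn : 0 ≤ ∫ s in t₁..t₂, G s := by
      apply intervalIntegral.integral_nonneg h12
      intro u hu
      have hu' : u ∈ Set.Icc (0:ℝ) 1 := ⟨le_trans h₁.1 hu.1, le_trans hu.2 h₂.2⟩
      have := Real.rpow_pos_of_pos (hq u hu') (p/2-1)
      simp only [hGdef]
      exact mul_nonneg (mul_nonneg (mul_nonneg (by linarith) (by linarith)) hC) this.le
    linarith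
  have hJGint : IntervalIntegrable JG volume 0 1 := by
    apply MonotoneOn.intervalIntegrable
    rwa [Set.uIcc_of_le (by norm_num : (0:ℝ) ≤ 1)]
  have hftc : (∫ t in (0:ℝ)..1, F₁ t) = F 1 - F 0 :=
    integral_eq_sub_of_hasDerivAt (fun x hx => hder1 x (hsub 0 1 h01 h11 hx))
      ((hF₁c.mono (hsub 0 1 h01 h11)).intervalIntegrable)
  have main : (∫ t in (0:ℝ)..1, (F₁ 0 + JG t)) ≤ F 1 - F 0 := by
    rw [← hftc]
    exact intervalIntegral.integral_mono_on (by norm_num)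
      (intervalIntegrable_const.add hJGint)
      ((hF₁c.mono (hsub 0 1 h01 h11)).intervalIntegrable)
      (fun t ht => by linarith [key2 t ht])
  rw [intervalIntegral.integral_add intervalIntegrable_const hJGint,
    intervalIntegral.integral_const] at main
  have hJGval : (∫ t in (0:ℝ)..1, JG t)
      = p*(p-1)*C * ∫ t in (0:ℝ)..1, ∫ s in (0:ℝ)..t, q s ^ (p/2-1) := by
    rw [← intervalIntegral.integral_const_mul]
    apply intervalIntegral.integral_congr
    intro t ht
    simp only [hJGdef, hGdef]
    rw [← intervalIntegral.integral_const_mul]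
  rw [hJGval] at main
  have hF0 : F 0 = A^(p/2) := by simp [hFdef, hqdef]
  have hF1 : F 1 = (A + 2*B + C)^(p/2) := by simp [hFdef, hqdef]
  have hF₁0 : F₁ 0 = p * A^(p/2-1) * B := by simp [hF₁def, hqdef, hmdef]
  rw [hF0, hF1, hF₁0] at main
  simp only [smul_eq_mul, sub_zero, one_mul] at main
  linarith

theorem stmt3 (n : ℕ) (p : ℝ) (hp1 : 1 < p) (hp2 : p < 2)
    (a b : EuclideanSpace ℝ (Fin n)) :
    ‖b‖ ^ p ≥ ‖a‖ ^ p + p * ⟪‖a‖ ^ (p - 2) • a, b - a⟫ +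
      p * (p - 1) * ‖b - a‖ ^ 2 *
        ∫ t in (0:ℝ)..1, ∫ s in (0:ℝ)..t, ‖(1 - s) • a + s • b‖ ^ (p - 2) := by
  have hp0 : (0:ℝ) < p := by linarith
  have hpne : p ≠ 0 := ne_of_gt hp0
  have hp1ne : p - 1 ≠ 0 := by intro h; linarith [sub_eq_zero.mp h]
  have hp2ne : p - 2 ≠ 0 := by intro h; linarith [sub_eq_zero.mp h]
  by_cases hba : b = a
  · subst hba
    simp
  by_cases hzero : ∃ s₀ ∈ Set.Icc (0:ℝ) 1, (1 - s₀) • a + s₀ • b = 0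
  · -- singular case: segment passes through 0
    obtain ⟨s₀, hs₀, hc⟩ := hzero
    have h0 := hs₀.1
    have h1 := hs₀.2
    obtain ⟨v, hvdef⟩ : ∃ v, v = b - a := ⟨_, rfl⟩
    have hv : v ≠ 0 := by rw [hvdef]; exact sub_ne_zero.mpr hba
    have hν : 0 < ‖v‖ := norm_pos_iff.mpr hv
    have hb : b = a + v := by rw [hvdef]; abel
    have ha' : a = (-s₀) • v := by
      have h' : a + s₀ • v = 0 := by
        rw [← hc, hb]; module
      calc a = -(s₀ • v) := eq_neg_of_add_eq_zero_left h'
        _ = (-s₀) • v := (neg_smul s₀ v).symm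
    have hb' : b = (1 - s₀) • v := by rw [hb, ha']; module
    have hcs : ∀ s : ℝ, (1 - s) • a + s • b = (s - s₀) • v := by
      intro s
      rw [hb, ha']; module
    have hna : ‖a‖ = s₀ * ‖v‖ := by
      rw [ha', norm_smul, Real.norm_eq_abs, abs_neg, abs_of_nonneg h0]
    have hnb : ‖b‖ = (1 - s₀) * ‖v‖ := by
      rw [hb', norm_smul, Real.norm_eq_abs, abs_of_nonneg (by linarith)]
    have hinner : ⟪a, v⟫ = -(s₀ * ‖v‖^2) := by
      rw [ha', real_inner_smul_left, real_inner_self_eq_norm_sq]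
      ring
    have hint_eq : ∀ s : ℝ, ‖(1 - s) • a + s • b‖ ^ (p-2) = |s - s₀| ^ (p-2) * ‖v‖ ^ (p-2) := by
      intro s
      rw [hcs s, norm_smul, Real.norm_eq_abs, Real.mul_rpow (abs_nonneg _) (norm_nonneg _)]
    rw [show b - a = v from hvdef.symm]
    simp only [hint_eq, intervalIntegral.integral_mul_const]
    rw [Ksum p s₀ hp1 hp2 h0 h1, real_inner_smul_left, hinner, hna, hnb]
    have e1 : (s₀ * ‖v‖) ^ p = s₀ ^ p * ‖v‖ ^ p := Real.mul_rpow h0 (norm_nonneg v)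
    have e2 : (s₀ * ‖v‖) ^ (p-2) = s₀ ^ (p-2) * ‖v‖ ^ (p-2) :=
      Real.mul_rpow h0 (norm_nonneg v)
    have e3 : ((1 - s₀) * ‖v‖) ^ p = (1 - s₀) ^ p * ‖v‖ ^ p :=
      Real.mul_rpow (by linarith) (norm_nonneg v)
    have e4 : s₀ ^ (p-1) = s₀ ^ (p-2) * s₀ := by
      rw [rpow_mul_self' h0 (by rwa [show p-2+1 = p-1 by ring]), show p-2+1 = p-1 by ring]
    have e5 : ‖v‖ ^ p = ‖v‖ ^ (p-2) * ‖v‖ ^ 2 := by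
      rw [← Real.rpow_natCast ‖v‖ 2, ← Real.rpow_add hν]
      norm_num
    rw [e1, e2, e3, e4, e5]
    apply ge_of_eq
    field_simp
    ring
  · -- nondegenerate case
    push_neg at hzero
    have hkey : ∀ s : ℝ, (1 - s) • a + s • b = a + s • (b - a) := by intro s; module
    set A := ‖a‖^2 with hA
    set B := ⟪a, b - a⟫ with hB
    set C := ‖b - a‖^2 with hC
    have hq2 : ∀ s : ℝ, ‖a + s • (b - a)‖^2 = A + 2*B*s + C*s^2 := by
      intro s
      rw [norm_add_sq_real, real_inner_smul_right, norm_smul, Real.norm_eq_abs, mul_pow, sq_abs]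
      ring
    have hq : ∀ s ∈ Set.Icc (0:ℝ) 1, 0 < A + 2*B*s + C*s^2 := by
      intro s hs
      rw [← hq2 s]
      have hne : a + s • (b - a) ≠ 0 := by
        rw [← hkey s]; exact hzero s hs
      exact pow_pos (norm_pos_iff.mpr hne) 2
    have hCnn : (0:ℝ) ≤ C := by positivity
    have hCS : B^2 ≤ A*C := by
      have h := real_inner_mul_inner_self_le a (b - a)
      rw [real_inner_self_eq_norm_sq, real_inner_self_eq_norm_sq] at h
      rw [hB, hA, hC]
      nlinarith [h]
    have hb2 : ‖b‖^p = (A + 2*B + C)^(p/2) := by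
      have : ‖b‖^2 = A + 2*B + C := by
        have := hq2 1
        simpa using this
      rw [← this, sq_rpow' (norm_nonneg b) hpne]
    have ha2 : ‖a‖^p = A^(p/2) := (sq_rpow' (norm_nonneg a) hpne).symm
    have ha3 : ‖a‖^(p-2) = A^(p/2-1) := by
      rw [← sq_rpow' (norm_nonneg a) hp2ne, show (p-2)/2 = p/2-1 by ring]
    have hint_eq : ∀ s : ℝ, ‖(1 - s) • a + s • b‖ ^ (p-2) = (A + 2*B*s + C*s^2)^(p/2-1) := by
      intro s
      rw [hkey s, ← sq_rpow' (norm_nonneg _) hp2ne, hq2 s, show (p-2)/2 = p/2-1 by ring]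
    simp only [hint_eq]
    rw [hb2, ha2, real_inner_smul_left, ha3]
    have H := oneD_s3 p A B C hp1 hp2 hCnn hCS hq
    linarith
end

section
/- Let Ω ⊂ R^n be open and bounded, 1 < p < ∞, u_0 ∈ W^{1,p}(Ω), and define I[v] = ∫_Ω (1/p)|∇v + ∇u_0|^p − (1/p)|∇u_0|^p for v ∈ W_0^{1,p}(Ω), where u_0 is a weak solution of the p-Laplace equation Δ_p u_0 = 0 (so ∫_Ω |∇u_0|^{p−2}∇u_0 · ∇v = 0 for all v ∈ W_0^{1,p}(Ω)). If p ≥ 2, then I[v] ≥ C(p) ‖v‖_{W_0^{1,p}}^p for all v ∈ W_0^{1,p}(Ω), where ‖v‖_{W_0^{1,p}} = (∫_Ω |∇v|^p)^{1/p} and C(p) > 0 depends only on p. -/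
open Real MeasureTheory
open scoped RealInnerProductSpace

lemma aux_add_rpow_le {x y q : ℝ} (hx : 0 ≤ x) (hy : 0 ≤ y) (hq : 1 ≤ q) :
    x ^ q + y ^ q ≤ (x + y) ^ q := by
  have h := NNReal.coe_le_coe.2 (NNReal.add_rpow_le_rpow_add x.toNNReal y.toNNReal hq)
  simpa [NNReal.coe_rpow, Real.coe_toNNReal x hx, Real.coe_toNNReal y hy] using h

lemma aux_rpow_add_le {x y q : ℝ} (hx : 0 ≤ x) (hy : 0 ≤ y) (hq : 1 ≤ q) :
    (x + y) ^ q ≤ 2 ^ (q - 1) * (x ^ q + y ^ q) := by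
  have h := NNReal.coe_le_coe.2 (NNReal.rpow_add_le_mul_rpow_add_rpow x.toNNReal y.toNNReal hq)
  simpa [NNReal.coe_rpow, Real.coe_toNNReal x hx, Real.coe_toNNReal y hy] using h

lemma aux_mul_rpow {t q : ℝ} (ht : 0 ≤ t) (hq : q + 1 ≠ 0) : t ^ q * t = t ^ (q + 1) := by
  rcases ht.eq_or_lt with h | h
  · rw [← h]; simp [Real.zero_rpow hq]
  · rw [Real.rpow_add h, Real.rpow_one]

variable {E : Type*} [NormedAddCommGroup E] [InnerProductSpace ℝ E]

lemma aux_clarkson {p : ℝ} (hp : 2 ≤ p) (x y : E) :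
    ‖x + y‖ ^ p + ‖x - y‖ ^ p ≤ 2 ^ (p - 1) * (‖x‖ ^ p + ‖y‖ ^ p) := by
  have h2 : (1 : ℝ) ≤ p / 2 := by linarith
  have key : ∀ u : E, ‖u‖ ^ p = (‖u‖ * ‖u‖) ^ (p / 2) := by
    intro u
    have h1 : ‖u‖ * ‖u‖ = ‖u‖ ^ (2:ℝ) := by
      rw [show (2:ℝ) = ((2:ℕ):ℝ) by norm_num, Real.rpow_natCast]; ring
    rw [h1, ← Real.rpow_mul (norm_nonneg u)]
    ring_nf
  rw [key (x + y), key (x - y), key x, key y]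
  calc (‖x + y‖ * ‖x + y‖) ^ (p/2) + (‖x - y‖ * ‖x - y‖) ^ (p/2)
      ≤ ((‖x + y‖ * ‖x + y‖) + (‖x - y‖ * ‖x - y‖)) ^ (p/2) :=
        aux_add_rpow_le (by positivity) (by positivity) h2
    _ = (2 * (‖x‖ * ‖x‖ + ‖y‖ * ‖y‖)) ^ (p/2) := by
        have hpl := parallelogram_law_with_norm ℝ x y
        simp only [sq] at hpl
        rw [hpl]
    _ = 2 ^ (p/2) * (‖x‖ * ‖x‖ + ‖y‖ * ‖y‖) ^ (p/2) :=
        Real.mul_rpow (by norm_num) (by positivity)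
    _ ≤ 2 ^ (p/2) * (2 ^ (p/2 - 1) * ((‖x‖ * ‖x‖) ^ (p/2) + (‖y‖ * ‖y‖) ^ (p/2))) := by
        have h := aux_rpow_add_le (x := ‖x‖ * ‖x‖) (y := ‖y‖ * ‖y‖) (by positivity) (by positivity) h2
        have h2p : (0:ℝ) ≤ 2 ^ (p/2) := by positivity
        exact mul_le_mul_of_nonneg_left h h2p
    _ = 2 ^ (p - 1) * ((‖x‖ * ‖x‖) ^ (p/2) + (‖y‖ * ‖y‖) ^ (p/2)) := by
        rw [← mul_assoc, ← Real.rpow_add (by norm_num : (0:ℝ) < 2)]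
        ring_nf

lemma aux_grad_ineq {p : ℝ} (hp : 2 ≤ p) (a c : E) :
    ⟪‖a‖ ^ (p - 2) • a, c⟫ ≤ (1 / p) * ‖a + c‖ ^ p - (1 / p) * ‖a‖ ^ p := by
  have hp0 : (0:ℝ) < p := by linarith
  have hp1 : (1:ℝ) < p := by linarith
  by_cases ha : a = 0
  · subst ha
    simp only [smul_zero, inner_zero_left, zero_add, norm_zero,
      Real.zero_rpow hp0.ne', mul_zero, sub_zero]
    positivity
  · have hna : 0 < ‖a‖ := norm_pos_iff.2 ha
    have hq : (p / (p - 1)).HolderConjugate p := (Real.HolderConjugate.conjExponent hp1).symm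
    set q := p / (p - 1) with hqdef
    have e1 : ⟪‖a‖ ^ (p - 2) • a, c⟫ = ‖a‖ ^ (p - 2) * ⟪a, c⟫ := real_inner_smul_left _ _ _
    have e2 : ⟪a, c⟫ = ⟪a, a + c⟫ - ‖a‖ * ‖a‖ := by
      rw [inner_add_right, real_inner_self_eq_norm_mul_norm]; ring
    have e3 : ⟪a, a + c⟫ ≤ ‖a‖ * ‖a + c‖ := real_inner_le_norm a (a + c)
    have hnn : (0:ℝ) ≤ ‖a‖ ^ (p - 2) := Real.rpow_nonneg (norm_nonneg a) _
    have h5 : ‖a‖ ^ (p - 2) * ‖a‖ = ‖a‖ ^ (p - 1) := by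
      have h := aux_mul_rpow (q := p - 2) (norm_nonneg a) (by intro h; linarith [show p - 2 + 1 = 0 from h])
      rw [show p - 2 + 1 = p - 1 by ring] at h
      exact h
    have h4 : ‖a‖ ^ (p - 1) * ‖a‖ = ‖a‖ ^ p := by
      have h := aux_mul_rpow (q := p - 1) (norm_nonneg a) (by intro h; linarith [show p - 1 + 1 = 0 from h])
      rw [show p - 1 + 1 = p by ring] at h
      exact h
    have young := Real.young_inequality_of_nonneg
      (a := ‖a‖ ^ (p - 1)) (b := ‖a + c‖) (by positivity) (norm_nonneg _) hq
    have h6 : (‖a‖ ^ (p - 1)) ^ q = ‖a‖ ^ p := by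
      rw [← Real.rpow_mul hna.le, hq.symm.sub_one_mul_conj]
    rw [h6] at young
    have hq1 : 1 / q = 1 - 1 / p := by
      have h := hq.inv_add_inv_eq_one
      have h2 : q⁻¹ = 1 / q := (one_div q).symm
      have h3 : p⁻¹ = 1 / p := (one_div p).symm
      linarith [h]
    have step1 : ⟪‖a‖ ^ (p - 2) • a, c⟫ ≤ ‖a‖ ^ (p - 1) * ‖a + c‖ - ‖a‖ ^ p := by
      rw [e1, e2]
      have hm : ‖a‖ ^ (p - 2) * ⟪a, a + c⟫ ≤ ‖a‖ ^ (p - 2) * (‖a‖ * ‖a + c‖) :=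
        mul_le_mul_of_nonneg_left e3 hnn
      calc ‖a‖ ^ (p - 2) * (⟪a, a + c⟫ - ‖a‖ * ‖a‖)
          = ‖a‖ ^ (p - 2) * ⟪a, a + c⟫ - (‖a‖ ^ (p - 2) * ‖a‖) * ‖a‖ := by ring
        _ ≤ ‖a‖ ^ (p - 2) * (‖a‖ * ‖a + c‖) - (‖a‖ ^ (p - 2) * ‖a‖) * ‖a‖ := by linarith
        _ = (‖a‖ ^ (p - 2) * ‖a‖) * ‖a + c‖ - (‖a‖ ^ (p - 2) * ‖a‖) * ‖a‖ := by ring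
        _ = ‖a‖ ^ (p - 1) * ‖a + c‖ - ‖a‖ ^ p := by rw [h5, h4]
    have hd1 : ‖a‖ ^ p / q = ‖a‖ ^ p - 1 / p * ‖a‖ ^ p := by
      rw [div_eq_mul_one_div, hq1]; ring
    have hd2 : ‖a + c‖ ^ p / p = 1 / p * ‖a + c‖ ^ p := by ring
    rw [hd1, hd2] at young
    linarith

lemma aux_pointwise {p : ℝ} (hp : 2 ≤ p) (a b : E) :
    ⟪‖a‖ ^ (p - 2) • a, b⟫ + (2 ^ (1 - p) / p) * ‖b‖ ^ p ≤
      (1 / p) * ‖b + a‖ ^ p - (1 / p) * ‖a‖ ^ p := by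
  have hp0 : (0:ℝ) < p := by linarith
  have hc : (0:ℝ) < 2 ^ p := Real.rpow_pos_of_pos (by norm_num) p
  set c : ℝ := (2:ℝ) ^ p with hcdef
  have h1 := aux_grad_ineq hp a ((1/2 : ℝ) • b)
  rw [real_inner_smul_right] at h1
  have h2 := aux_clarkson hp (a + b) a
  have e : (a + b) + a = (2 : ℝ) • (a + (1/2 : ℝ) • b) := by
    rw [smul_add, smul_smul]
    norm_num
    rw [two_smul]
    abel
  have e2 : (a + b) - a = b := by abel
  rw [e, e2] at h2
  have e3 : ‖(2:ℝ) • (a + (1/2:ℝ) • b)‖ ^ p = c * ‖a + (1/2:ℝ) • b‖ ^ p := by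
    rw [norm_smul, Real.norm_ofNat]
    exact Real.mul_rpow (by norm_num) (norm_nonneg _)
  rw [e3] at h2
  have hhalf : (2:ℝ) ^ (p - 1) = c / 2 := by
    rw [hcdef, Real.rpow_sub (by norm_num : (0:ℝ) < 2), Real.rpow_one]
  rw [hhalf] at h2
  have e4 : (2:ℝ) ^ (1 - p) = 2 / c := by
    rw [hcdef, Real.rpow_sub (by norm_num : (0:ℝ) < 2), Real.rpow_one]
  set X := ‖a + (1/2:ℝ) • b‖ ^ p with hX'
  set S := ‖a + b‖ ^ p with hS'
  set A := ‖a‖ ^ p with hA'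
  set B := ‖b‖ ^ p with hB'
  set I := ⟪‖a‖ ^ (p - 2) • a, b⟫ with hI'
  have hX : X ≤ (S + A) / 2 - B / c := by
    have hstep : X ≤ (c / 2 * (S + A) - B) / c := by
      rw [le_div_iff₀ hc]
      have : X * c = c * X := mul_comm _ _
      linarith
    calc X ≤ (c / 2 * (S + A) - B) / c := hstep
      _ = (S + A) / 2 - B / c := by field_simp
  have hI : I ≤ 2 / p * X - 2 / p * A := by
    calc I ≤ 2 * (1 / p * X - 1 / p * A) := by linarith
      _ = 2 / p * X - 2 / p * A := by ring
  have hmul : 2 / p * X ≤ 2 / p * ((S + A) / 2 - B / c) :=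
    mul_le_mul_of_nonneg_left hX (by positivity)
  have hSeq : ‖b + a‖ ^ p = S := by rw [add_comm]
  rw [hSeq, e4]
  calc I + 2 / c / p * B ≤ (2 / p * X - 2 / p * A) + 2 / c / p * B := by linarith
    _ ≤ (2 / p * ((S + A) / 2 - B / c) - 2 / p * A) + 2 / c / p * B := by linarith
    _ = 1 / p * S - 1 / p * A := by field_simp; ring

lemma aux_inner_bound {p : ℝ} (hp : 2 ≤ p) (a b : E) :
    ‖⟪‖a‖ ^ (p - 2) • a, b⟫‖ ≤ ‖a‖ ^ p + ‖b‖ ^ p := by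
  have h1 : ‖⟪‖a‖ ^ (p - 2) • a, b⟫‖ ≤ ‖‖a‖ ^ (p - 2) • a‖ * ‖b‖ := norm_inner_le_norm _ _
  have h2 : ‖‖a‖ ^ (p - 2) • a‖ = ‖a‖ ^ (p - 2) * ‖a‖ := by
    rw [norm_smul, Real.norm_eq_abs, abs_of_nonneg (Real.rpow_nonneg (norm_nonneg a) _)]
  have h5 : ‖a‖ ^ (p - 2) * ‖a‖ = ‖a‖ ^ (p - 1) := by
    have h := aux_mul_rpow (q := p - 2) (norm_nonneg a) (by intro h; linarith [show p - 2 + 1 = 0 from h])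
    rw [show p - 2 + 1 = p - 1 by ring] at h
    exact h
  have h4 : ∀ u : E, ‖u‖ ^ (p - 1) * ‖u‖ = ‖u‖ ^ p := by
    intro u
    have h := aux_mul_rpow (q := p - 1) (norm_nonneg u) (by intro h; linarith [show p - 1 + 1 = 0 from h])
    rw [show p - 1 + 1 = p by ring] at h
    exact h
  rw [h2, h5] at h1
  have hbp : (0:ℝ) ≤ ‖b‖ ^ p := Real.rpow_nonneg (norm_nonneg b) p
  have hap : (0:ℝ) ≤ ‖a‖ ^ p := Real.rpow_nonneg (norm_nonneg a) p
  rcases le_total ‖b‖ ‖a‖ with h | h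
  · have hm : ‖a‖ ^ (p - 1) * ‖b‖ ≤ ‖a‖ ^ (p - 1) * ‖a‖ :=
      mul_le_mul_of_nonneg_left h (Real.rpow_nonneg (norm_nonneg a) _)
    rw [h4 a] at hm
    linarith
  · have hb1 : ‖a‖ ^ (p - 1) ≤ ‖b‖ ^ (p - 1) :=
      Real.rpow_le_rpow (norm_nonneg a) h (by linarith)
    have hm : ‖a‖ ^ (p - 1) * ‖b‖ ≤ ‖b‖ ^ (p - 1) * ‖b‖ :=
      mul_le_mul_of_nonneg_right hb1 (norm_nonneg b)
    rw [h4 b] at hm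
    linarith

set_option maxHeartbeats 1000000 in
theorem stmt13 (p : ℝ) (hp : 2 ≤ p) :
    ∃ C : ℝ, 0 < C ∧
      ∀ (n : ℕ) (Ω : Set (EuclideanSpace ℝ (Fin n))), IsOpen Ω →
        Bornology.IsBounded Ω →
        ∀ u₀ : EuclideanSpace ℝ (Fin n) → ℝ, Differentiable ℝ u₀ →
          IntegrableOn (fun x => ‖gradient u₀ x‖ ^ p) Ω →
          -- weak p-harmonicity of u₀ : ∫ |∇u₀|^{p-2} ∇u₀ · ∇φ = 0 for test functions φ
          (∀ φ : EuclideanSpace ℝ (Fin n) → ℝ, Differentiable ℝ φ →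
            HasCompactSupport φ → tsupport φ ⊆ Ω →
            ∫ x in Ω, ⟪‖gradient u₀ x‖ ^ (p - 2) • gradient u₀ x, gradient φ x⟫ = 0) →
          ∀ v : EuclideanSpace ℝ (Fin n) → ℝ, Differentiable ℝ v →
            HasCompactSupport v → tsupport v ⊆ Ω →
            IntegrableOn (fun x => ‖gradient v x‖ ^ p) Ω →
            ∫ x in Ω, ((1 / p) * ‖gradient v x + gradient u₀ x‖ ^ p -
                (1 / p) * ‖gradient u₀ x‖ ^ p) ≥
              C * ∫ x in Ω, ‖gradient v x‖ ^ p := by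
  have hp0 : (0:ℝ) < p := by linarith
  refine ⟨2 ^ (1 - p) / p, by positivity, ?_⟩
  intro n Ω hΩo hΩb u₀ hu₀ hA hweak v hv hvc hvs hB
  have hΩm : MeasurableSet Ω := hΩo.measurableSet
  have hga : Measurable (gradient u₀) := by
    have h1 : Measurable (fderiv ℝ u₀) := measurable_fderiv ℝ u₀
    exact ((InnerProductSpace.toDual ℝ (EuclideanSpace ℝ (Fin n))).symm.continuous.measurable).comp h1
  have hgb : Measurable (gradient v) := by
    have h1 : Measurable (fderiv ℝ v) := measurable_fderiv ℝ v
    exact ((InnerProductSpace.toDual ℝ (EuclideanSpace ℝ (Fin n))).symm.continuous.measurable).comp h1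
  set a := gradient u₀ with hadef
  set b := gradient v with hbdef
  -- measurability of the integrands
  have hmH : Measurable fun x => ⟪‖a x‖ ^ (p - 2) • a x, b x⟫ := by
    apply Measurable.inner
    · exact ((Real.continuous_rpow_const (by linarith : (0:ℝ) ≤ p - 2)).measurable.comp hga.norm).smul hga
    · exact hgb
  have hmS : Measurable fun x => ‖b x + a x‖ ^ p :=
    (Real.continuous_rpow_const (by linarith : (0:ℝ) ≤ p)).measurable.comp (hgb.add hga).norm
  -- integrability
  have hIH : IntegrableOn (fun x => ⟪‖a x‖ ^ (p - 2) • a x, b x⟫) Ω := by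
    apply Integrable.mono' (hA.add hB) hmH.aestronglyMeasurable.restrict
    exact Filter.Eventually.of_forall fun x => aux_inner_bound hp (a x) (b x)
  have hIS : IntegrableOn (fun x => ‖b x + a x‖ ^ p) Ω := by
    apply Integrable.mono' (((hB.add hA).const_mul (2 ^ (p - 1))))
      hmS.aestronglyMeasurable.restrict
    apply Filter.Eventually.of_forall
    intro x
    rw [Real.norm_of_nonneg (Real.rpow_nonneg (norm_nonneg _) _)]
    calc ‖b x + a x‖ ^ p ≤ (‖b x‖ + ‖a x‖) ^ p :=
          Real.rpow_le_rpow (norm_nonneg _) (norm_add_le _ _) (by linarith)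
      _ ≤ 2 ^ (p - 1) * (‖b x‖ ^ p + ‖a x‖ ^ p) :=
          aux_rpow_add_le (norm_nonneg _) (norm_nonneg _) (by linarith)
  have hIL : IntegrableOn (fun x => (1 / p) * ‖b x + a x‖ ^ p - (1 / p) * ‖a x‖ ^ p) Ω :=
    (hIS.const_mul _).sub (hA.const_mul _)
  have h0 : ∫ x in Ω, ⟪‖a x‖ ^ (p - 2) • a x, b x⟫ = 0 := hweak v hv hvc hvs
  have key : ∀ x, ⟪‖a x‖ ^ (p - 2) • a x, b x⟫ + (2 ^ (1 - p) / p) * ‖b x‖ ^ p ≤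
      (1 / p) * ‖b x + a x‖ ^ p - (1 / p) * ‖a x‖ ^ p :=
    fun x => aux_pointwise hp (a x) (b x)
  have hmono : ∫ x in Ω, (⟪‖a x‖ ^ (p - 2) • a x, b x⟫ + (2 ^ (1 - p) / p) * ‖b x‖ ^ p) ≤
      ∫ x in Ω, ((1 / p) * ‖b x + a x‖ ^ p - (1 / p) * ‖a x‖ ^ p) :=
    setIntegral_mono_on (hIH.add (hB.const_mul _)) hIL hΩm (fun x _ => key x)
  have hsplit : ∫ x in Ω, (⟪‖a x‖ ^ (p - 2) • a x, b x⟫ + (2 ^ (1 - p) / p) * ‖b x‖ ^ p) =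
      (∫ x in Ω, ⟪‖a x‖ ^ (p - 2) • a x, b x⟫) + (2 ^ (1 - p) / p) * ∫ x in Ω, ‖b x‖ ^ p := by
    rw [integral_add hIH (hB.const_mul _), integral_const_mul]
  rw [hsplit, h0, zero_add] at hmono
  exact hmono
end
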